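/- Let c > 0 and let f : ℝ × ℝⁿ → ℝⁿ satisfy ⟨f(t, a) − f(t, b), a − b⟩ ≤ −c ‖a − b‖² for all t ∈ ℝ and a, b ∈ ℝⁿ, and additionally f(t, 0) = 0 for all t ∈ ℝ. Let d : [0,∞) → ℝⁿ be continuous and let x : [0,∞) → ℝⁿ be continuously differentiable with ẋ(t) = f(t, x(t)) + d(t) for all t ≥ 0. Then for all t ≥ 0: ‖x(t)‖ ≤ e^{−ct} ‖x(0)‖ + (1/c) · sup_{s ∈ [0,t]} ‖d(s)‖. -/

import Mathlib

/-!
Away from the origin `‖x‖` is differentiable with derivative `⟪x, ẋ⟫ / ‖x‖`, and strong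
contraction towards `f(t, 0) = 0` bounds this by `-c ‖x‖ + M`, where `M` bounds `‖d‖`; at a
zero of `x` the right Dini derivative of `‖x‖` is at most `‖ẋ‖ = ‖d‖ ≤ M`. So `‖x‖` satisfies
the differential inequality `u' ≤ -c u + M` in the Dini sense, and Grönwall's inequality with
the negative rate `-c` gives `‖x(t)‖ ≤ e^{-ct} ‖x(0)‖ + (M / c)(1 - e^{-ct})`.
-/

open Set Topology

open scoped RealInnerProductSpace

section NormDeriv

variable {F : Type*} [NormedAddCommGroup F] [InnerProductSpace ℝ F]

theorem HasDerivWithinAt.norm_of_ne_zero {f : ℝ → F} {f' : F} {s : Set ℝ} {x : ℝ}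
    (hf : HasDerivWithinAt f f' s x) (h0 : f x ≠ 0) :
    HasDerivWithinAt (‖f ·‖) (⟪f x, f'⟫ / ‖f x‖) s x := by
  have hsq : ‖f x‖ ^ 2 ≠ 0 := by positivity
  convert hf.norm_sq.sqrt hsq using 1
  · simp only [Real.sqrt_sq (norm_nonneg _)]
  · rw [Real.sqrt_sq (norm_nonneg _)]
    field_simp

theorem HasDerivWithinAt.frequently_right_slope_norm_lt {f : ℝ → F} {f' : F} {x K M r : ℝ}
    (hf : HasDerivWithinAt f f' (Ici x) x) (hinner : ⟪f', f x⟫ ≤ (K * ‖f x‖ + M) * ‖f x‖)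
    (hzero : f x = 0 → ‖f'‖ ≤ M) (hr : K * ‖f x‖ + M < r) :
    ∃ᶠ z in 𝓝[>] x, (z - x)⁻¹ * (‖f z‖ - ‖f x‖) < r := by
  by_cases h0 : f x = 0
  · refine hf.liminf_right_slope_norm_le ((hzero h0).trans_lt ?_)
    simpa [h0] using hr
  · have hpos : 0 < ‖f x‖ := norm_pos_iff.2 h0
    have hderiv : ⟪f x, f'⟫ / ‖f x‖ ≤ K * ‖f x‖ + M := by
      rw [div_le_iff₀ hpos, real_inner_comm]
      exact hinner
    simpa only [slope_def_field, div_eq_inv_mul] using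
      (hf.norm_of_ne_zero h0).liminf_right_slope_le (hderiv.trans_lt hr)

theorem norm_le_gronwallBound_of_inner_deriv_le {f f' : ℝ → F} {K M a b : ℝ}
    (hf : ContinuousOn f (Icc a b)) (hf' : ∀ s ∈ Ico a b, HasDerivWithinAt f (f' s) (Ici s) s)
    (hinner : ∀ s ∈ Ico a b, ⟪f' s, f s⟫ ≤ (K * ‖f s‖ + M) * ‖f s‖)
    (hzero : ∀ s ∈ Ico a b, f s = 0 → ‖f' s‖ ≤ M) :
    ∀ s ∈ Icc a b, ‖f s‖ ≤ gronwallBound ‖f a‖ K M (s - a) :=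
  le_gronwallBound_of_liminf_deriv_right_le (f' := fun s ↦ K * ‖f s‖ + M) hf.norm
    (fun s hs _ hr ↦ (hf' s hs).frequently_right_slope_norm_lt (hinner s hs) (hzero s hs) hr)
    le_rfl fun _ _ ↦ le_rfl

end NormDeriv

theorem gronwallBound_neg_le {δ c M : ℝ} (hc : 0 < c) (hM : 0 ≤ M) (x : ℝ) :
    gronwallBound δ (-c) M x ≤ δ * Real.exp (-c * x) + M / c := by
  rw [gronwallBound_of_K_ne_0 (neg_ne_zero.2 hc.ne'), div_neg]
  have hexp := Real.exp_pos (-c * x)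
  have hMc : 0 ≤ M / c := div_nonneg hM hc.le
  dsimp only
  nlinarith

theorem inner_add_le_of_inner_le {F : Type*} [NormedAddCommGroup F] [InnerProductSpace ℝ F]
    {u v a : F} {c M : ℝ} (hu : ⟪u, a⟫ ≤ -c * ‖a‖ ^ 2) (hv : ‖v‖ ≤ M) :
    ⟪u + v, a⟫ ≤ (-c * ‖a‖ + M) * ‖a‖ := by
  have hva : ⟪v, a⟫ ≤ M * ‖a‖ :=
    (real_inner_le_norm v a).trans (mul_le_mul_of_nonneg_right hv (norm_nonneg a))
  rw [inner_add_left]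
  linarith

/-- input-to-state estimate for a strongly contracting vector field
vanishing at the origin. If `⟨f(t,a) − f(t,b), a − b⟩ ≤ −c‖a − b‖²`, `f(t,0) = 0`,
and `x` solves `ẋ = f(t,x) + d(t)` on `[0,∞)` with `d` continuous, then
`‖x(t)‖ ≤ e^{−ct}‖x(0)‖ + (1/c) sup_{s∈[0,t]} ‖d(s)‖`. -/
theorem contraction_iss_estimate_origin
    (n : ℕ) (c : ℝ) (hc : 0 < c)
    (f : ℝ → EuclideanSpace ℝ (Fin n) → EuclideanSpace ℝ (Fin n))
    (hf : ∀ (t : ℝ) (a b : EuclideanSpace ℝ (Fin n)),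
      inner ℝ (f t a - f t b) (a - b) ≤ -c * ‖a - b‖ ^ 2)
    (hf0 : ∀ t : ℝ, f t 0 = 0)
    (d : ℝ → EuclideanSpace ℝ (Fin n)) (hd : ContinuousOn d (Ici 0))
    (x : ℝ → EuclideanSpace ℝ (Fin n))
    (hx : ∀ t ∈ Ici (0 : ℝ), HasDerivWithinAt x (f t (x t) + d t) (Ici 0) t) :
    ∀ t ∈ Ici (0 : ℝ),
      ‖x t‖ ≤ Real.exp (-c * t) * ‖x 0‖ +
        (1 / c) * sSup ((fun s => ‖d s‖) '' Icc 0 t) := by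
  intro t ht
  set M := sSup ((fun s => ‖d s‖) '' Icc 0 t)
  have hdM : ∀ s ∈ Icc 0 t, ‖d s‖ ≤ M := fun s hs ↦ le_csSup
    (isCompact_Icc.image_of_continuousOn (hd.mono Icc_subset_Ici_self).norm).bddAbove
    (mem_image_of_mem _ hs)
  have hM : 0 ≤ M := (norm_nonneg _).trans (hdM 0 (left_mem_Icc.2 ht))
  have hfx : ∀ s, ⟪f s (x s), x s⟫ ≤ -c * ‖x s‖ ^ 2 := fun s ↦ by
    simpa [hf0] using hf s (x s) 0
  have hbound := norm_le_gronwallBound_of_inner_deriv_le (K := -c)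
    (fun s hs ↦ (hx s hs.1).continuousWithinAt.mono Icc_subset_Ici_self)
    (fun s hs ↦ (hx s hs.1).mono (Ici_subset_Ici.2 hs.1))
    (fun s hs ↦ inner_add_le_of_inner_le (hfx s) (hdM s (Ico_subset_Icc_self hs)))
    (fun s hs h0 ↦ by simpa [h0, hf0] using hdM s (Ico_subset_Icc_self hs))
    t (right_mem_Icc.2 ht)
  calc ‖x t‖ ≤ gronwallBound ‖x 0‖ (-c) M t := by simpa using hbound
    _ ≤ ‖x 0‖ * Real.exp (-c * t) + M / c := gronwallBound_neg_le hc hM t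
    _ = Real.exp (-c * t) * ‖x 0‖ + 1 / c * M := by ring
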